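/- arXiv:cs/0210008 — 2 statements merged into one kernel-verified Lean document; each statement's English description precedes it below -/
import Mathlib

section
/- Let g be the 3-state cellular automaton on states Fin 3 defined by g(i,j,k) = 0 if j = 0 and i = k, and g(i,j,k) = max(i, max(j, k)) otherwise. For w : Fin n → Fin 3, let p₂(w) : Option ℕ be the least index i with w i = 2 (none if no such index), and let p₁(w) : Option ℕ be the least index i with w i = 1 such that w e ≠ 2 for all e ≤ i (none if no such index). Then for every n ≥ 1 and all u, v : Fin n → Fin 3, g^n(u, 0, v) = 0 if and only if both: (p₂(u) = none and p₂(v) = none, or p₂(u) = p₂(v)), and (p₁(u) = none and p₁(v) = none, or p₁(u) = p₁(v)). -/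
/-- The `n`-th iterate of a one-dimensional CA local rule `f`, applied to an
assignment `x` of states to integer positions. It only depends on positions `-n,…,n`:
`caIter f 1 x = f (x (-1)) (x 0) (x 1)` and
`caIter f (n+1) x = f (caIter f n (x shifted left)) (caIter f n x) (caIter f n (x shifted right))`. -/
def caIter {Q : Type*} (f : Q → Q → Q → Q) : ℕ → (ℤ → Q) → Q
  | 0, x => x 0
  | n + 1, x =>
      f (caIter f n fun i => x (i - 1)) (caIter f n x) (caIter f n fun i => x (i + 1))

/-- The assignment of states to integer positions determined by left cells `u`
(`u i` at position `-(i+1)`), center `c` (position `0`) and right cells `v`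
(`v i` at position `i+1`); positions outside `-n,…,n` (irrelevant for `caIter f n`)
are padded with `c`. -/
def caEmbed {Q : Type*} (n : ℕ) (u : Fin n → Q) (c : Q) (v : Fin n → Q) : ℤ → Q :=
  fun i =>
    if h : 1 ≤ i ∧ i ≤ (n : ℤ) then v ⟨(i - 1).toNat, by omega⟩
    else if h' : 1 ≤ -i ∧ -i ≤ (n : ℤ) then u ⟨(-i - 1).toNat, by omega⟩
    else c

/-- `f^n(u, c, v)`. -/
def caApply {Q : Type*} (f : Q → Q → Q → Q) (n : ℕ) (u : Fin n → Q) (c : Q)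
    (v : Fin n → Q) : Q :=
  caIter f n (caEmbed n u c v)

/-- Number of distinct rows of the matrix `M_c^n`. -/
noncomputable def caRows {Q : Type*} (f : Q → Q → Q → Q) (n : ℕ) (c : Q) : ℕ :=
  Set.ncard {g : (Fin n → Q) → Q | ∃ u : Fin n → Q, g = fun v => caApply f n u c v}

/-- Number of distinct columns of the matrix `M_c^n`. -/
noncomputable def caCols {Q : Type*} (f : Q → Q → Q → Q) (n : ℕ) (c : Q) : ℕ :=
  Set.ncard {g : (Fin n → Q) → Q | ∃ v : Fin n → Q, g = fun u => caApply f n u c v}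

/-- `d_n(f)` for an ECA `f`. -/
noncomputable def dnECA (f : Bool → Bool → Bool → Bool) (n : ℕ) : ℕ :=
  max (max (caRows f n false) (caCols f n false)) (max (caRows f n true) (caCols f n true))

/-- `p₂ w`: the least index `i` with `w i = 2` (`none` if there is no such index). -/
def p2 {n : ℕ} (w : Fin n → Fin 3) : Option ℕ :=
  ((List.finRange n).find? fun i => w i = 2).map Fin.val

/-- `p₁ w`: the least index `i` with `w i = 1` such that `w e ≠ 2` for all `e ≤ i`
(`none` if there is no such index). -/
def p1 {n : ℕ} (w : Fin n → Fin 3) : Option ℕ :=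
  ((List.finRange n).find? fun i =>
    w i = 1 && decide (∀ e : Fin n, e ≤ i → w e ≠ 2)).map Fin.val

/-!
Generalize the states to a linear order with bottom `⊥` (playing the role of `0`) and the rule
to `g a b c = ⊥` if `b = ⊥ ∧ a = c`, `max a (max b c)` otherwise. By induction on `t`, the value
of the centre after `t` steps is `⊥` if the configuration is balanced up to `t` (the centre is `⊥`
and for every `s ≤ t` the maximum of the `s` cells to the left equals that of the `s` cells to
the right), and is the maximum of the window `[-t, t]` otherwise. In the inductive step, for a
configuration balanced up to `t` the left neighbour's value is exactly the left maximum up to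
`t + 1`: if the neighbour is balanced too, the two balance conditions force that maximum to be `⊥`.

For words over `Fin 3` the sequence of prefix maxima jumps to `2` exactly after position `p₂`,
and from `0` to `1` exactly after position `p₁`, so two words have the same prefix maxima iff
they have the same `p₁` and `p₂`.
-/

section MaxRule

variable {α : Type*} [LinearOrder α] [OrderBot α]

def maxRule (a b c : α) : α := if b = ⊥ ∧ a = c then ⊥ else max a (max b c)

noncomputable def supIcc (x : ℤ → α) (a b : ℤ) : α := (Finset.Icc a b).sup x

variable {x : ℤ → α} {a b c : ℤ}

lemma le_supIcc {q : ℤ} (ha : a ≤ q) (hb : q ≤ b) : x q ≤ supIcc x a b :=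
  Finset.le_sup (Finset.mem_Icc.2 ⟨ha, hb⟩)

lemma supIcc_le {m : α} (h : ∀ q, a ≤ q → q ≤ b → x q ≤ m) : supIcc x a b ≤ m :=
  Finset.sup_le fun q hq => h q (Finset.mem_Icc.1 hq).1 (Finset.mem_Icc.1 hq).2

lemma supIcc_eq_bot_iff : supIcc x a b = ⊥ ↔ ∀ q, a ≤ q → q ≤ b → x q = ⊥ := by
  simp [supIcc, Finset.sup_eq_bot_iff]

lemma supIcc_of_lt (h : b < a) : supIcc x a b = ⊥ := by
  simp [supIcc, Finset.Icc_eq_empty_of_lt h]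

@[simp] lemma supIcc_self : supIcc x a a = x a := by
  simp [supIcc]

lemma supIcc_mono {a' b' : ℤ} (ha : a' ≤ a) (hb : b ≤ b') : supIcc x a b ≤ supIcc x a' b' :=
  supIcc_le fun _ hqa hqb => le_supIcc (ha.trans hqa) (hqb.trans hb)

lemma supIcc_split (hab : a ≤ b + 1) (hbc : b ≤ c) :
    supIcc x a c = max (supIcc x a b) (supIcc x (b + 1) c) := by
  refine le_antisymm (supIcc_le fun q hqa hqc => ?_)
    (max_le (supIcc_mono le_rfl hbc) (supIcc_mono (by omega) le_rfl))
  rcases le_or_gt q b with hqb | hqb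
  · exact le_max_of_le_left (le_supIcc hqa hqb)
  · exact le_max_of_le_right (le_supIcc (by omega) hqc)

lemma supIcc_comp_add (d : ℤ) : supIcc (fun i => x (i + d)) a b = supIcc x (a + d) (b + d) := by
  rw [supIcc, supIcc, ← Finset.map_add_right_Icc, Finset.sup_map]
  rfl

lemma supIcc_comp_sub_one : supIcc (fun i => x (i - 1)) a b = supIcc x (a - 1) (b - 1) := by
  simpa only [← sub_eq_add_neg] using supIcc_comp_add (x := x) (a := a) (b := b) (-1)

lemma supIcc_comp_neg : supIcc (fun i => x (-i)) a b = supIcc x (-b) (-a) :=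
  le_antisymm (supIcc_le fun _ hqa hqb => le_supIcc (by omega) (by omega))
    (supIcc_le fun q hqa hqb => by
      simpa using le_supIcc (x := fun i => x (-i)) (q := -q) (by omega) (by omega))

def IsBalanced (x : ℤ → α) (t : ℕ) : Prop :=
  x 0 = ⊥ ∧ ∀ s : ℕ, s ≤ t → supIcc x (-s) (-1) = supIcc x 1 s

open Classical in
noncomputable def maxRuleValue (x : ℤ → α) (t : ℕ) : α :=
  if IsBalanced x t then ⊥ else supIcc x (-t) t

variable {t : ℕ}

lemma IsBalanced.mono {t' : ℕ} (h : IsBalanced x t) (ht : t' ≤ t) : IsBalanced x t' :=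
  ⟨h.1, fun s hs => h.2 s (hs.trans ht)⟩

lemma IsBalanced.succ_iff (h : IsBalanced x t) :
    IsBalanced x (t + 1) ↔ supIcc x (-(t + 1)) (-1) = supIcc x 1 (t + 1) := by
  refine ⟨fun h' => by exact_mod_cast h'.2 (t + 1) le_rfl, fun he => ⟨h.1, fun s hs => ?_⟩⟩
  rcases Nat.of_le_succ hs with hs | rfl
  · exact h.2 s hs
  · exact_mod_cast he

lemma isBalanced_comp_neg : IsBalanced (fun i => x (-i)) t ↔ IsBalanced x t := by
  simp only [IsBalanced, supIcc_comp_neg, neg_neg, neg_zero]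
  exact and_congr_right fun _ => forall₂_congr fun _ _ => eq_comm

lemma maxRuleValue_of_isBalanced (h : IsBalanced x t) : maxRuleValue x t = ⊥ := if_pos h

lemma maxRuleValue_of_not_isBalanced (h : ¬IsBalanced x t) :
    maxRuleValue x t = supIcc x (-t) t := if_neg h

lemma maxRuleValue_le : maxRuleValue x t ≤ supIcc x (-t) t := by
  unfold maxRuleValue; split_ifs <;> simp

lemma maxRuleValue_eq_bot_iff : maxRuleValue x t = ⊥ ↔ IsBalanced x t := by
  refine ⟨fun h => ?_, maxRuleValue_of_isBalanced⟩
  by_contra hx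
  rw [maxRuleValue_of_not_isBalanced hx, supIcc_eq_bot_iff] at h
  refine hx ⟨h 0 (by omega) (by omega), fun s hs => ?_⟩
  rw [supIcc_eq_bot_iff.2 fun q _ _ => h q (by omega) (by omega),
    supIcc_eq_bot_iff.2 fun q _ _ => h q (by omega) (by omega)]

lemma maxRuleValue_comp_neg : maxRuleValue (fun i => x (-i)) t = maxRuleValue x t := by
  by_cases h : IsBalanced x t
  · rw [maxRuleValue_of_isBalanced h, maxRuleValue_of_isBalanced (isBalanced_comp_neg.2 h)]
  · rw [maxRuleValue_of_not_isBalanced h,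
      maxRuleValue_of_not_isBalanced (mt isBalanced_comp_neg.1 h), supIcc_comp_neg, neg_neg]

lemma supIcc_zero_left (h0 : x 0 = ⊥) : supIcc x 0 b = supIcc x 1 b := by
  rcases lt_or_ge b 0 with hb | hb
  · rw [supIcc_of_lt hb, supIcc_of_lt (by omega)]
  · rw [supIcc_split (b := 0) (by omega) hb, supIcc_self, h0, max_eq_right bot_le, zero_add]

lemma supIcc_zero_right (h0 : x 0 = ⊥) : supIcc x a 0 = supIcc x a (-1) := by
  have := supIcc_zero_left (x := fun i => x (-i)) (b := -a) (by simpa using h0)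
  simpa [supIcc_comp_neg] using this

lemma supIcc_neg_self_of_isBalanced (h : IsBalanced x t) : supIcc x (-t) t = supIcc x 1 t := by
  rw [supIcc_split (b := 0) (by omega) (by omega), supIcc_zero_right h.1, h.2 t le_rfl, zero_add,
    max_self]

lemma supIcc_left_eq_bot_of_isBalanced_comp_sub_one (h : IsBalanced x t)
    (hy : IsBalanced (fun i => x (i - 1)) t) : supIcc x (-(t + 1)) (-1) = ⊥ := by
  suffices H : ∀ s : ℕ, s ≤ t + 1 → supIcc x (-s) (-1) = ⊥ by exact_mod_cast H (t + 1) le_rfl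
  intro s
  induction s using Nat.twoStepInduction with
  | zero => exact fun _ => supIcc_of_lt (by omega)
  | one => exact fun _ => by simpa using hy.1
  | more s ih _ =>
    intro hs
    have hshift : supIcc x (-(s + 2 : ℕ)) (-2) = supIcc x 0 s := by
      have := hy.2 (s + 1) (by omega)
      rw [supIcc_comp_sub_one, supIcc_comp_sub_one] at this
      convert this using 2 <;> push_cast <;> ring
    rw [supIcc_split (b := -2) (by omega) (by omega), hshift, supIcc_zero_left h.1,
      ← h.2 s (by omega), ih (by omega)]
    simpa using hy.1

lemma maxRuleValue_comp_sub_one (h : IsBalanced x t) :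
    maxRuleValue (fun i => x (i - 1)) t = supIcc x (-(t + 1)) (-1) := by
  by_cases hy : IsBalanced (fun i => x (i - 1)) t
  · rw [maxRuleValue_of_isBalanced hy, supIcc_left_eq_bot_of_isBalanced_comp_sub_one h hy]
  · have hle : supIcc x 0 (t - 1) ≤ supIcc x (-(t + 1)) (-1) :=
      calc supIcc x 0 (t - 1) ≤ supIcc x 1 t := by
            rw [supIcc_zero_left h.1]; exact supIcc_mono le_rfl (by omega)
        _ = supIcc x (-t) (-1) := (h.2 t le_rfl).symm
        _ ≤ supIcc x (-(t + 1)) (-1) := supIcc_mono (by omega) le_rfl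
    rw [maxRuleValue_of_not_isBalanced hy, supIcc_comp_sub_one,
      supIcc_split (b := -1) (by omega) (by omega)]
    simpa [sub_eq_add_neg, add_comm] using hle

lemma maxRuleValue_comp_add_one (h : IsBalanced x t) :
    maxRuleValue (fun i => x (i + 1)) t = supIcc x 1 (t + 1) := by
  have := maxRuleValue_comp_sub_one (isBalanced_comp_neg.2 h)
  simp only [supIcc_comp_neg, neg_neg] at this
  rw [← this, ← maxRuleValue_comp_neg]
  congr with i
  ring_nf

lemma supIcc_neg_self_le_max_right :
    supIcc x (-t) t ≤ max (maxRuleValue x t) (supIcc x 1 t) := by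
  by_cases h : IsBalanced x t
  · rw [supIcc_neg_self_of_isBalanced h]; exact le_max_right _ _
  · rw [maxRuleValue_of_not_isBalanced h]; exact le_max_left _ _

lemma supIcc_neg_self_le_max_left :
    supIcc x (-t) t ≤ max (maxRuleValue x t) (supIcc x (-t) (-1)) := by
  by_cases h : IsBalanced x t
  · rw [supIcc_neg_self_of_isBalanced h, ← h.2 t le_rfl]; exact le_max_right _ _
  · rw [maxRuleValue_of_not_isBalanced h]; exact le_max_left _ _

lemma le_max_maxRuleValue_comp_sub_one :
    x (-(t + 1)) ≤ max (maxRuleValue (fun i => x (i - 1)) t) (supIcc x (-t) t) :=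
  calc x (-(t + 1)) = x (-t - 1) := by ring_nf
    _ ≤ supIcc (fun i => x (i - 1)) (-t) t := le_supIcc (x := fun i => x (i - 1)) le_rfl (by omega)
    _ ≤ _ := supIcc_neg_self_le_max_right
    _ ≤ _ := max_le_max le_rfl <| by
      rw [supIcc_comp_sub_one]; exact supIcc_mono (by omega) (by omega)

lemma le_max_maxRuleValue_comp_add_one :
    x (t + 1) ≤ max (maxRuleValue (fun i => x (i + 1)) t) (supIcc x (-t) t) :=
  calc x (t + 1) ≤ supIcc (fun i => x (i + 1)) (-t) t :=
        le_supIcc (x := fun i => x (i + 1)) (by omega) le_rfl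
    _ ≤ _ := supIcc_neg_self_le_max_left
    _ ≤ _ := max_le_max le_rfl <| by
      rw [supIcc_comp_add]; exact supIcc_mono (by omega) (by omega)

lemma maxRule_maxRuleValue_of_isBalanced (h : IsBalanced x t) :
    maxRule (maxRuleValue (fun i => x (i - 1)) t) (maxRuleValue x t)
      (maxRuleValue (fun i => x (i + 1)) t) = maxRuleValue x (t + 1) := by
  rw [maxRuleValue_comp_sub_one h, maxRuleValue_comp_add_one h, maxRuleValue_of_isBalanced h,
    maxRule]
  by_cases he : supIcc x (-(t + 1)) (-1) = supIcc x 1 (t + 1)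
  · rw [if_pos ⟨rfl, he⟩, maxRuleValue_of_isBalanced (h.succ_iff.2 he)]
  · rw [if_neg fun h' => he h'.2, maxRuleValue_of_not_isBalanced (mt h.succ_iff.1 he),
      max_eq_right bot_le]
    push_cast
    rw [supIcc_split (a := -(t + 1)) (b := 0) (c := t + 1) (by omega) (by omega),
      supIcc_zero_right h.1, zero_add]

lemma maxRule_maxRuleValue_of_not_isBalanced (h : ¬IsBalanced x t) :
    maxRule (maxRuleValue (fun i => x (i - 1)) t) (maxRuleValue x t)
      (maxRuleValue (fun i => x (i + 1)) t) = maxRuleValue x (t + 1) := by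
  have hM : maxRuleValue x t ≠ ⊥ := mt maxRuleValue_eq_bot_iff.1 h
  rw [maxRule, if_neg fun h' => hM h'.1, maxRuleValue_of_not_isBalanced (mt (·.mono t.le_succ) h)]
  rw [maxRuleValue_of_not_isBalanced h] at hM ⊢
  push_cast
  refine le_antisymm (max_le ?_ (max_le (supIcc_mono (by omega) (by omega)) ?_))
    (supIcc_le fun q hq1 hq2 => ?_)
  · refine maxRuleValue_le.trans ?_
    rw [supIcc_comp_sub_one]; exact supIcc_mono (by omega) (by omega)
  · refine maxRuleValue_le.trans ?_
    rw [supIcc_comp_add]; exact supIcc_mono (by omega) (by omega)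
  · rcases lt_or_ge q (-t) with hq | hq
    · obtain rfl : q = -(t + 1) := by omega
      exact le_max_maxRuleValue_comp_sub_one.trans (max_le_max le_rfl (le_max_left _ _))
    rcases le_or_gt q t with hq' | hq'
    · exact le_max_of_le_right (le_max_of_le_left (le_supIcc hq hq'))
    · obtain rfl : q = t + 1 := by omega
      exact le_max_maxRuleValue_comp_add_one.trans
        (max_le (le_max_of_le_right (le_max_right _ _)) (le_max_of_le_right (le_max_left _ _)))

theorem caIter_maxRule (t : ℕ) (x : ℤ → α) : caIter maxRule t x = maxRuleValue x t := by
  induction t generalizing x with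
  | zero =>
    by_cases h : IsBalanced x 0
    · rw [maxRuleValue_of_isBalanced h]; exact h.1
    · rw [maxRuleValue_of_not_isBalanced h]; simp [caIter]
  | succ t ih =>
    rw [caIter, ih, ih, ih]
    by_cases h : IsBalanced x t
    · exact maxRule_maxRuleValue_of_isBalanced h
    · exact maxRule_maxRuleValue_of_not_isBalanced h

end MaxRule

section Embedding

variable {α : Type*} {n : ℕ} {u v : Fin n → α} {c : α}

@[simp] lemma caEmbed_zero : caEmbed n u c v 0 = c := by simp [caEmbed]

lemma caEmbed_natCast_add_one (i : Fin n) : caEmbed n u c v ((i : ℕ) + 1) = v i := by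
  simp [caEmbed]

lemma caEmbed_neg (i : ℤ) : caEmbed n u c v (-i) = caEmbed n v c u i := by
  unfold caEmbed
  split_ifs <;> first | omega | simp

variable [LinearOrder α] [OrderBot α]

def prefixSup (w : Fin n → α) (s : ℕ) : α := ({i | (i : ℕ) < s} : Finset (Fin n)).sup w

lemma le_prefixSup {w : Fin n → α} {s : ℕ} {i : Fin n} (h : (i : ℕ) < s) : w i ≤ prefixSup w s :=
  Finset.le_sup (by simpa using h)

lemma prefixSup_le {w : Fin n → α} {s : ℕ} {m : α} (h : ∀ i : Fin n, (i : ℕ) < s → w i ≤ m) :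
    prefixSup w s ≤ m :=
  Finset.sup_le fun i hi => h i (by simpa using hi)

lemma prefixSup_zero (w : Fin n → α) : prefixSup w 0 = ⊥ := by simp [prefixSup]

lemma prefixSup_mono (w : Fin n → α) : Monotone (prefixSup w) :=
  fun _ _ hst => prefixSup_le fun _ hi => le_prefixSup (hi.trans_le hst)

lemma prefixSup_of_le {w : Fin n → α} {s : ℕ} (h : n ≤ s) : prefixSup w s = prefixSup w n :=
  le_antisymm (prefixSup_le fun i _ => le_prefixSup i.isLt)
    (prefixSup_le fun i _ => le_prefixSup (i.isLt.trans_le h))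

lemma supIcc_caEmbed_one {s : ℕ} (hs : s ≤ n) : supIcc (caEmbed n u c v) 1 s = prefixSup v s := by
  refine le_antisymm (supIcc_le fun q hq1 hq2 => ?_) (prefixSup_le fun i hi => ?_)
  · lift q - 1 to ℕ using (by omega) with k hk
    obtain rfl : q = k + 1 := by omega
    rw [caEmbed_natCast_add_one ⟨k, by omega⟩]
    exact le_prefixSup (by simp; omega)
  · rw [← caEmbed_natCast_add_one (u := u) (c := c) (v := v) i]
    exact le_supIcc (by omega) (by omega)

lemma supIcc_caEmbed_neg {s : ℕ} (hs : s ≤ n) :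
    supIcc (caEmbed n u c v) (-s) (-1) = prefixSup u s := by
  have hflip : caEmbed n v c u = fun i => caEmbed n u c v (-i) :=
    funext fun i => (caEmbed_neg i).symm
  rw [← supIcc_caEmbed_one (u := v) (v := u) (c := c) hs, hflip, supIcc_comp_neg]

lemma isBalanced_caEmbed_iff :
    IsBalanced (caEmbed n u ⊥ v) n ↔ ∀ s, prefixSup u s = prefixSup v s := by
  refine ⟨fun h s => ?_, fun h => ⟨caEmbed_zero, fun s hs => ?_⟩⟩
  · rcases le_total s n with hs | hs
    · rw [← supIcc_caEmbed_neg (v := v) (c := ⊥) hs, ← supIcc_caEmbed_one (u := u) hs, h.2 s hs]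
    · rw [prefixSup_of_le hs, prefixSup_of_le hs, ← supIcc_caEmbed_neg (v := v) (c := ⊥) le_rfl,
        ← supIcc_caEmbed_one (u := u) le_rfl, h.2 n le_rfl]
  · rw [supIcc_caEmbed_neg hs, supIcc_caEmbed_one hs, h]

end Embedding

section ThreeStates

variable {n : ℕ} {w : Fin n → Fin 3} {s m : ℕ}

lemma prefixSup_eq_zero_iff : prefixSup w s = 0 ↔ ∀ i : Fin n, (i : ℕ) < s → w i = 0 := by
  simp [prefixSup, ← bot_eq_zero, Finset.sup_eq_bot_iff]

lemma prefixSup_eq_two_iff : prefixSup w s = 2 ↔ ∃ i : Fin n, (i : ℕ) < s ∧ w i = 2 := by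
  refine ⟨fun h => ?_, fun ⟨i, hi, h2⟩ => ?_⟩
  · by_contra! hw
    have : prefixSup w s ≤ 1 := prefixSup_le fun i hi => by have := hw i hi; omega
    omega
  · have := le_prefixSup (w := w) hi
    omega

lemma p2_eq_some_iff :
    p2 w = some m ↔ ∃ i : Fin n, (i : ℕ) = m ∧ w i = 2 ∧ ∀ j < i, w j ≠ 2 := by
  simp only [p2, Option.map_eq_some_iff, ← Fin.find?_eq_find?_finRange, Fin.find?_eq_some_iff]
  simp [and_comm]

lemma p1_eq_some_iff :
    p1 w = some m ↔ ∃ i : Fin n, (i : ℕ) = m ∧ w i = 1 ∧ ∀ j < i, w j = 0 := by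
  simp only [p1, Option.map_eq_some_iff, ← Fin.find?_eq_find?_finRange, Fin.find?_eq_some_iff]
  simp only [Bool.and_eq_true, decide_eq_true_eq, Bool.and_eq_false_iff, decide_eq_false_iff_not]
  refine exists_congr fun i => ⟨?_, ?_⟩
  · rintro ⟨⟨⟨hi, hno2⟩, hmin⟩, rfl⟩
    refine ⟨rfl, hi, fun j hj => ?_⟩
    have h2 := hno2 j hj.le
    have h1 : w j ≠ 1 := (hmin j hj).resolve_right fun h => h fun e he => hno2 e (he.trans hj.le)
    omega
  · rintro ⟨rfl, hi, hz⟩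
    refine ⟨⟨⟨hi, fun e he => ?_⟩, fun j hj => Or.inl ?_⟩, rfl⟩
    · rcases he.lt_or_eq with he | rfl
      · rw [hz e he]; decide
      · rw [hi]; decide
    · rw [hz j hj]; decide

lemma p2_eq_some_iff_prefixSup : p2 w = some m ↔ prefixSup w m ≠ 2 ∧ prefixSup w (m + 1) = 2 := by
  rw [p2_eq_some_iff, ne_eq, prefixSup_eq_two_iff, prefixSup_eq_two_iff]
  constructor
  · rintro ⟨i, rfl, hi, hmin⟩
    exact ⟨fun ⟨j, hj, hj2⟩ => hmin j hj hj2, i, by omega, hi⟩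
  · rintro ⟨hm, i, hi, hi2⟩
    have him : (i : ℕ) = m := by
      by_contra
      exact hm ⟨i, by omega, hi2⟩
    exact ⟨i, him, hi2, fun j hj hj2 => hm ⟨j, by omega, hj2⟩⟩

lemma p1_eq_some_iff_prefixSup : p1 w = some m ↔ prefixSup w m = 0 ∧ prefixSup w (m + 1) = 1 := by
  have h1 : prefixSup w (m + 1) = 1 ↔ ¬prefixSup w (m + 1) = 2 ∧ ¬prefixSup w (m + 1) = 0 := by
    omega
  rw [p1_eq_some_iff, h1, prefixSup_eq_two_iff, prefixSup_eq_zero_iff, prefixSup_eq_zero_iff]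
  constructor
  · rintro ⟨i, rfl, hi, hmin⟩
    refine ⟨fun j hj => hmin j hj, fun ⟨j, hj, hj2⟩ => ?_, fun h0 => ?_⟩
    · rcases (Nat.lt_succ_iff_lt_or_eq.1 hj) with hj | hj
      · have := hmin j hj; omega
      · rw [Fin.ext hj] at hj2; omega
    · have := h0 i (by omega); omega
  · rintro ⟨hm, h2, h0⟩
    push Not at h0 h2
    obtain ⟨i, hi, hi0⟩ := h0
    have him : (i : ℕ) = m := by
      by_contra
      exact hi0 (hm i (by omega))
    refine ⟨i, him, ?_, fun j hj => hm j (by omega)⟩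
    have := h2 i hi
    omega

lemma prefixSup_eq_iff_p2_eq_and_p1_eq {u v : Fin n → Fin 3} :
    (∀ s, prefixSup u s = prefixSup v s) ↔ p2 u = p2 v ∧ p1 u = p1 v := by
  refine ⟨fun h => ⟨Option.ext fun m => ?_, Option.ext fun m => ?_⟩, fun ⟨h2, h1⟩ s => ?_⟩
  · rw [p2_eq_some_iff_prefixSup, p2_eq_some_iff_prefixSup, h, h]
  · rw [p1_eq_some_iff_prefixSup, p1_eq_some_iff_prefixSup, h, h]
  induction s with
  | zero => rw [prefixSup_zero, prefixSup_zero]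
  | succ s ih =>
    have e2 := p2_eq_some_iff_prefixSup (w := u) (m := s)
    rw [h2, p2_eq_some_iff_prefixSup, ih] at e2
    have e1 := p1_eq_some_iff_prefixSup (w := u) (m := s)
    rw [h1, p1_eq_some_iff_prefixSup, ih] at e1
    have hu := prefixSup_mono u (Nat.le_add_right s 1)
    have hv := prefixSup_mono v (Nat.le_add_right s 1)
    rw [ih] at hu
    -- in `Fin 3`, a monotone step is determined by whether it jumps to `2` and by whether it
    -- jumps from `0` to `1`
    omega

end ThreeStates

/-- For the 3-state CA `g(i,j,k) = 0` if `j = 0 ∧ i = k` and `max i (max j k)` otherwise: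
a cell in state `0` remains in state `0` after `n` steps iff the positions of the nearest
state-2 cells on the two sides agree (or neither exists), and likewise for the nearest
state-1 cells occurring before any state-2 cell. -/
theorem threeState_center_zero (g : Fin 3 → Fin 3 → Fin 3 → Fin 3)
    (hg : ∀ i j k : Fin 3, g i j k = if j = 0 ∧ i = k then 0 else max i (max j k)) :
    ∀ n : ℕ, 1 ≤ n → ∀ u v : Fin n → Fin 3,
      (caApply g n u 0 v = 0 ↔
        ((p2 u = none ∧ p2 v = none) ∨ p2 u = p2 v) ∧
        ((p1 u = none ∧ p1 v = none) ∨ p1 u = p1 v)) := by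
  have hg_maxRule : g = maxRule := by
    funext i j k
    rw [hg, maxRule, bot_eq_zero]
  have or_eq_iff {a b : Option ℕ} : (a = none ∧ b = none) ∨ a = b ↔ a = b :=
    or_iff_right_of_imp fun h => h.1.trans h.2.symm
  intro n _ u v
  rw [caApply, hg_maxRule, ← bot_eq_zero, caIter_maxRule, maxRuleValue_eq_bot_iff,
    isBalanced_caEmbed_iff, prefixSup_eq_iff_p2_eq_and_p1_eq, or_eq_iff, or_eq_iff]
end

section
/- Let g be the 3-state cellular automaton on states Fin 3 defined by g(i,j,k) = 0 if j = 0 and i = k, and g(i,j,k) = max(i, max(j, k)) otherwise. For 0 ≤ j ≤ i ≤ n define w_{i,j} : Fin n → Fin 3 by w_{i,j}(d) = 0 if d < j, w_{i,j}(d) = 1 if j ≤ d < i, and w_{i,j}(d) = 2 if i ≤ d. Then for all 0 ≤ j ≤ i ≤ n and 0 ≤ j' ≤ i' ≤ n, g^n(w_{i,j}, 0, w_{i',j'}) = 0 if and only if (i,j) = (i',j'). Consequently the matrix M_0^n of g has at least (n+1)(n+2)/2 distinct rows, so the number of distinct rows grows quadratically in n. -/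
/-!
Read `g` as a synchronous update of an integer-indexed configuration. The configuration encoded
by `(w_{i,j}, 0, w_{i',j'})` is a staircase: zeros out to distance `j` (left) and `j'` (right)
from the centre, then ones out to `i` and `i'`, then twos. As long as the two halves look alike
next to the centre, one step of `g` lowers every stair by one and the centre stays `0`. For
`(i,j) = (i',j')` the configuration and `g` are both symmetric, so the centre stays `0` forever.
Otherwise, after `min j j'` steps (or `min i i'` steps if `j = j'`) the two neighbours of the
centre differ, the centre turns nonzero, and a nonzero centre never returns to `0` because `g`
then takes a maximum. The pairs `(i, j)` thus form a fooling set for `M_0^n`.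
-/

open Finset Function

section CellularAutomaton

variable {Q : Type*} (f : Q → Q → Q → Q)

def caStep (x : ℤ → Q) : ℤ → Q :=
  fun p => f (x (p - 1)) (x p) (x (p + 1))

theorem caIter_succ_eq_caIter_caStep (n : ℕ) (x : ℤ → Q) :
    caIter f (n + 1) x = caIter f n (caStep f x) := by
  induction n generalizing x with
  | zero => rfl
  | succ n ih =>
    have shift_left : caStep f (fun p => x (p - 1)) = fun p => caStep f x (p - 1) := by
      funext p
      simp only [caStep, sub_add_cancel, sub_sub, add_sub_cancel_right]
    have shift_right : caStep f (fun p => x (p + 1)) = fun p => caStep f x (p + 1) := by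
      funext p
      simp only [caStep, add_sub_cancel_right, sub_add_cancel]
    rw [caIter, ih, ih, ih, shift_left, shift_right]
    rfl

theorem caIter_eq_iterate_caStep (n : ℕ) (x : ℤ → Q) : caIter f n x = (caStep f)^[n] x 0 := by
  induction n generalizing x with
  | zero => rfl
  | succ n ih => rw [caIter_succ_eq_caIter_caStep, ih, iterate_succ_apply]

theorem caIter_congr {n : ℕ} {x y : ℤ → Q} (h : ∀ p : ℤ, -n ≤ p → p ≤ n → x p = y p) :
    caIter f n x = caIter f n y := by
  induction n generalizing x y with
  | zero => exact h 0 le_rfl le_rfl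
  | succ n ih =>
    simp only [caIter]
    rw [ih fun p _ _ => h _ (by omega) (by omega), ih fun p _ _ => h _ (by omega) (by omega),
      ih fun p _ _ => h _ (by omega) (by omega)]

theorem iterate_caStep_apply_zero_mem {S : Set Q} (hS : ∀ a b c, b ∈ S → f a b c ∈ S)
    (m : ℕ) {x : ℤ → Q} (hx : x 0 ∈ S) : (caStep f)^[m] x 0 ∈ S := by
  induction m generalizing x with
  | zero => exact hx
  | succ m ih => exact ih (hS _ _ _ hx)

variable {f}

theorem caStep_apply_neg (hf : ∀ a b c, f a b c = f c b a) {x : ℤ → Q}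
    (hx : ∀ p, x (-p) = x p) (p : ℤ) : caStep f x (-p) = caStep f x p := by
  rw [caStep, caStep, hf, show -p + 1 = -(p - 1) by ring, show -p - 1 = -(p + 1) by ring,
    hx, hx, hx]

theorem iterate_caStep_apply_zero_of_neg {q : Q} (hf : ∀ a b c, f a b c = f c b a)
    (hq : ∀ a, f a q a = q) (m : ℕ) {x : ℤ → Q} (hx : ∀ p, x (-p) = x p) (hx₀ : x 0 = q) :
    (caStep f)^[m] x 0 = q := by
  induction m generalizing x with
  | zero => exact hx₀
  | succ m ih =>
    refine ih (caStep_apply_neg hf hx) ?_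
    rw [caStep, zero_sub, zero_add, hx 1, hx₀, hq]

theorem card_le_caRows [Finite Q] {n : ℕ} {c q : Q} {ι : Type*} (s : Finset ι)
    (u v : ι → Fin n → Q) (hfool : ∀ a ∈ s, ∀ b ∈ s, caApply f n (u a) c (v b) = q ↔ a = b) :
    s.card ≤ caRows f n c := by
  rw [caRows, ← Set.ncard_coe_finset]
  refine Set.ncard_le_ncard_of_injOn (fun a v => caApply f n (u a) c v) (fun a _ => ⟨u a, rfl⟩)
    (fun a ha b hb hab => ?_) (Set.toFinite _)
  have hba : caApply f n (u b) c (v a) = q :=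
    (congrFun hab (v a)).symm.trans ((hfool a ha a ha).2 rfl)
  exact ((hfool b hb a ha).1 hba).symm

end CellularAutomaton

theorem card_sigma_range_range (n : ℕ) :
    ((range (n + 1)).sigma fun i => range (i + 1)).card = (n + 1) * (n + 2) / 2 := by
  have h := sum_range_succ' (fun i => i) (n + 1)
  simp only [add_zero] at h
  simp only [card_sigma, card_range, ← h, sum_range_id, Nat.add_sub_cancel, mul_comm]

namespace ThreeState

def rule (a b c : Fin 3) : Fin 3 :=
  if b = 0 ∧ a = c then 0 else max a (max b c)

theorem rule_comm (a b c : Fin 3) : rule a b c = rule c b a := by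
  revert a b c; decide

theorem rule_self_zero_self (a : Fin 3) : rule a 0 a = 0 := by
  simp [rule]

theorem rule_ne_zero_of_ne_zero (a b c : Fin 3) (hb : b ≠ 0) : rule a b c ≠ 0 := by
  revert a b c; decide

theorem rule_zero_ne_zero {a c : Fin 3} (h : a ≠ c) : rule a 0 c ≠ 0 := by
  revert a c; decide

/-- The state at distance `k` from the centre on one side of a staircase. -/
def level (i j k : ℕ) : Fin 3 :=
  if k ≤ j then 0 else if k ≤ i then 1 else 2

theorem level_zero (i j : ℕ) : level i j 0 = 0 := if_pos (Nat.zero_le j)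

theorem level_one_eq_level_one_iff {i j i' j' : ℕ} (hj : j ≤ i) (hj' : j' ≤ i') :
    level i j 1 = level i' j' 1 ↔ (j = 0 ↔ j' = 0) ∧ (i = 0 ↔ i' = 0) := by
  simp only [level]
  split_ifs <;> simp <;> omega

theorem rule_level {i j k : ℕ} (hj : j ≤ i) (hk : 1 ≤ k) :
    rule (level i j (k - 1)) (level i j k) (level i j (k + 1)) = level (i - 1) (j - 1) k := by
  simp only [rule, level]
  split_ifs <;> first | rfl | omega

def stair (i j i' j' : ℕ) (p : ℤ) : Fin 3 :=
  if 0 ≤ p then level i' j' p.natAbs else level i j p.natAbs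

theorem stair_of_nonneg (i j : ℕ) {i' j' : ℕ} {p : ℤ} (hp : 0 ≤ p) :
    stair i j i' j' p = level i' j' p.natAbs :=
  if_pos hp

theorem stair_of_nonpos {i j : ℕ} (i' j' : ℕ) {p : ℤ} (hp : p ≤ 0) :
    stair i j i' j' p = level i j p.natAbs := by
  rcases hp.lt_or_eq with hp | rfl
  · exact if_neg (by omega)
  · simp only [stair, le_refl, if_pos, Int.natAbs_zero, level_zero]

theorem stair_neg (i j : ℕ) (p : ℤ) : stair i j i j (-p) = stair i j i j p := by
  simp only [stair, Int.natAbs_neg]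
  split_ifs <;> rfl

theorem caEmbed_eq_stair {w : ∀ n : ℕ, ℕ → ℕ → Fin n → Fin 3}
    (hw : ∀ (n i j : ℕ) (d : Fin n),
      w n i j d = if (d : ℕ) < j then 0 else if (d : ℕ) < i then 1 else 2)
    {n i j i' j' : ℕ} {p : ℤ} (hp₁ : -n ≤ p) (hp₂ : p ≤ n) :
    caEmbed n (w n i j) 0 (w n i' j') p = stair i j i' j' p := by
  simp only [caEmbed, hw, stair, level]
  split_ifs <;> first | rfl | omega

theorem caStep_rule_stair_apply_zero (i j i' j' : ℕ) :
    caStep rule (stair i j i' j') 0 = rule (level i j 1) 0 (level i' j' 1) := by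
  rw [caStep, stair_of_nonpos i' j' (p := 0 - 1) (by omega), stair_of_nonneg i j le_rfl,
    stair_of_nonneg i j (p := 0 + 1) (by omega), Int.natAbs_zero, level_zero]
  rfl

theorem caStep_rule_stair {i j i' j' : ℕ} (hj : j ≤ i) (hj' : j' ≤ i')
    (h : level i j 1 = level i' j' 1) :
    caStep rule (stair i j i' j') = stair (i - 1) (j - 1) (i' - 1) (j' - 1) := by
  funext p
  rcases lt_trichotomy p 0 with hp | rfl | hp
  · rw [caStep, stair_of_nonpos i' j' (p := p - 1) (by omega), stair_of_nonpos i' j' hp.le,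
      stair_of_nonpos i' j' (p := p + 1) (by omega), stair_of_nonpos _ _ hp.le, rule_comm,
      show (p - 1).natAbs = p.natAbs + 1 by omega, show (p + 1).natAbs = p.natAbs - 1 by omega]
    exact rule_level hj (by omega)
  · rw [caStep_rule_stair_apply_zero, stair_of_nonneg _ _ le_rfl, Int.natAbs_zero, level_zero, h,
      rule_self_zero_self]
  · rw [caStep, stair_of_nonneg i j (p := p - 1) (by omega), stair_of_nonneg i j hp.le,
      stair_of_nonneg i j (p := p + 1) (by omega), stair_of_nonneg _ _ hp.le,
      show (p - 1).natAbs = p.natAbs - 1 by omega, show (p + 1).natAbs = p.natAbs + 1 by omega]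
    exact rule_level hj' (by omega)

theorem iterate_caStep_rule_stair {i j i' j' t : ℕ} (hj : j ≤ i) (hj' : j' ≤ i')
    (h : ∀ s < t, level (i - s) (j - s) 1 = level (i' - s) (j' - s) 1) :
    (caStep rule)^[t] (stair i j i' j') = stair (i - t) (j - t) (i' - t) (j' - t) := by
  induction t with
  | zero => rfl
  | succ t ih =>
    rw [iterate_succ_apply', ih fun s hs => h s (by omega),
      caStep_rule_stair (by omega) (by omega) (h t t.lt_succ_self)]
    simp only [Nat.sub_sub]

theorem iterate_caStep_rule_stair_apply_zero_ne_zero {n i j i' j' : ℕ} (hj : j ≤ i) (hi : i ≤ n)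
    (hj' : j' ≤ i') (hi' : i' ≤ n) (hne : ¬(i = i' ∧ j = j')) :
    (caStep rule)^[n] (stair i j i' j') 0 ≠ 0 := by
  obtain ⟨t, halike, hsplit, htn⟩ : ∃ t,
      (∀ s < t, (j - s = 0 ↔ j' - s = 0) ∧ (i - s = 0 ↔ i' - s = 0)) ∧
      ¬((j - t = 0 ↔ j' - t = 0) ∧ (i - t = 0 ↔ i' - t = 0)) ∧ t < n := by
    by_cases hjj : j = j'
    · exact ⟨min i i', fun s hs => by omega, by omega, by omega⟩
    · exact ⟨min j j', fun s hs => by omega, by omega, by omega⟩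
  have hfire : (caStep rule)^[t + 1] (stair i j i' j') 0 ≠ 0 := by
    rw [iterate_succ_apply', iterate_caStep_rule_stair hj hj'
      fun s hs => (level_one_eq_level_one_iff (by omega) (by omega)).2 (halike s hs),
      caStep_rule_stair_apply_zero]
    exact rule_zero_ne_zero fun h => hsplit ((level_one_eq_level_one_iff (by omega) (by omega)).1 h)
  obtain ⟨m, rfl⟩ := Nat.exists_eq_add_of_lt htn
  rw [add_right_comm, add_comm, iterate_add_apply]
  exact iterate_caStep_apply_zero_mem rule (S := {0}ᶜ) rule_ne_zero_of_ne_zero m hfire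

theorem iterate_caStep_rule_stair_apply_zero_eq_zero_iff {n i j i' j' : ℕ} (hj : j ≤ i)
    (hi : i ≤ n) (hj' : j' ≤ i') (hi' : i' ≤ n) :
    (caStep rule)^[n] (stair i j i' j') 0 = 0 ↔ i = i' ∧ j = j' := by
  refine ⟨fun h => by_contra fun hne =>
    iterate_caStep_rule_stair_apply_zero_ne_zero hj hi hj' hi' hne h, ?_⟩
  rintro ⟨rfl, rfl⟩
  exact iterate_caStep_apply_zero_of_neg rule_comm rule_self_zero_self n (stair_neg i j)
    ((stair_of_nonneg i j le_rfl).trans (level_zero i j))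

end ThreeState

/-- For the 3-state CA `g(i,j,k) = 0` if `j = 0 ∧ i = k` and `max i (max j k)` otherwise:
with `w_{i,j}(d) = 0` for `d < j`, `1` for `j ≤ d < i` and `2` for `i ≤ d`, the entry
`g^n(w_{i,j}, 0, w_{i',j'})` is `0` iff `(i,j) = (i',j')`; consequently `M_0^n` has at
least `(n+1)(n+2)/2` distinct rows, i.e. quadratically many. -/
theorem threeState_quadratic (g : Fin 3 → Fin 3 → Fin 3 → Fin 3)
    (hg : ∀ i j k : Fin 3, g i j k = if j = 0 ∧ i = k then 0 else max i (max j k))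
    (w : ∀ n : ℕ, ℕ → ℕ → Fin n → Fin 3)
    (hw : ∀ (n i j : ℕ) (d : Fin n),
      w n i j d = if (d : ℕ) < j then 0 else if (d : ℕ) < i then 1 else 2) :
    ∀ n : ℕ, 1 ≤ n →
      (∀ i j i' j' : ℕ, j ≤ i → i ≤ n → j' ≤ i' → i' ≤ n →
        (caApply g n (w n i j) 0 (w n i' j') = 0 ↔ (i = i' ∧ j = j'))) ∧
      (n + 1) * (n + 2) / 2 ≤ caRows g n 0 := by
  obtain rfl : g = ThreeState.rule := funext fun a => funext fun b => funext fun c => hg a b c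
  intro n _
  have fooling : ∀ i j i' j' : ℕ, j ≤ i → i ≤ n → j' ≤ i' → i' ≤ n →
      (caApply ThreeState.rule n (w n i j) 0 (w n i' j') = 0 ↔ (i = i' ∧ j = j')) := by
    intro i j i' j' hj hi hj' hi'
    rw [caApply, caIter_congr _ fun p hp₁ hp₂ => ThreeState.caEmbed_eq_stair hw hp₁ hp₂,
      caIter_eq_iterate_caStep]
    exact ThreeState.iterate_caStep_rule_stair_apply_zero_eq_zero_iff hj hi hj' hi'
  refine ⟨fooling, ?_⟩
  rw [← card_sigma_range_range]
  refine card_le_caRows (q := 0) _ (fun a => w n a.1 a.2) (fun a => w n a.1 a.2)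
    fun a ha b hb => ?_
  simp only [mem_sigma, mem_range] at ha hb
  rw [fooling _ _ _ _ (by omega) (by omega) (by omega) (by omega), Sigma.ext_iff, heq_iff_eq]
end
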